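/- Let (Ω, 𝓕, μ) be a probability space, let P be an M×M real matrix such that every eigenvalue of P, viewed as a matrix over ℂ, has modulus strictly less than 1, let B be an M×n real matrix, and let u ∈ ℝⁿ. Let (P_t)_{t≥0} and (B_t)_{t≥0} be sequences of measurable random M×M and M×n real matrices on Ω such that, μ-almost surely, P_t → P and B_t → B entrywise as t → ∞. Let α(t) = a/(t+1)^δ with a > 0 and 0 < δ ≤ 1, fix x(0) ∈ ℝ^M, and define the random sequence x(t+1) = (1 − α(t))·x(t) + α(t)·(P_t·x(t) + B_t·u). Then μ-almost surely, x(t) converges as t → ∞ to (I − P)^{-1}·B·u. -/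

import Mathlib

/-!
Gelfand's formula turns `ρ(P) < 1` into `‖P ^ k‖ ≤ s ^ k` for some `k ≥ 1` and `s < 1`, and then
`N v = ∑_{j<k} ‖(s⁻¹ P) ^ j v‖` is a norm, equivalent to the original one, in which `P` is an
`s`-contraction. Fix a sample point at which `P_t → P` and `B_t → B`. Then the error
`e_t = x(t) - (I - P)⁻¹ B u` satisfies, for all large `t`,
`N(e_{t+1}) ≤ (1 - c α(t)) N(e_t) + α(t) η_t` with `c > 0` and `η_t → 0`, and since
`∑ α(t) = ∞` such a recursion forces `N(e_t) → 0`.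
-/

open Filter MeasureTheory

/-- `ρ(P) < 1`: every eigenvalue of `P`, viewed as a matrix over `ℂ`
(equivalently, every complex root of its characteristic polynomial),
has modulus strictly less than `1`. -/
def SpecRadiusLtOne {M : ℕ} (P : Matrix (Fin M) (Fin M) ℝ) : Prop :=
  ∀ z : ℂ, (P.map (algebraMap ℝ ℂ)).charpoly.IsRoot z → ‖z‖ < 1

open Topology Finset
open scoped NNReal ENNReal

theorem tendsto_zero_of_le_one_sub_mul {d γ : ℕ → ℝ} (hd : ∀ t, 0 ≤ d t)
    (hγ : Tendsto (fun m => ∑ t ∈ range m, γ t) atTop atTop)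
    (hrec : ∀ᶠ t in atTop, d (t + 1) ≤ (1 - γ t) * d t) :
    Tendsto d atTop (𝓝 0) := by
  obtain ⟨T, hT⟩ := eventually_atTop.mp hrec
  set C := d T * Real.exp (∑ t ∈ range T, γ t)
  have hbound : ∀ t ≥ T, d t ≤ C * Real.exp (-∑ i ∈ range t, γ i) := by
    refine Nat.le_induction ?_ fun t ht ih => ?_
    · simp [C, mul_assoc, ← Real.exp_add]
    calc d (t + 1) ≤ (1 - γ t) * d t := hT t ht
      _ ≤ Real.exp (-γ t) * d t := by
        gcongr
        · exact hd t
        · linarith [Real.add_one_le_exp (-γ t)]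
      _ ≤ Real.exp (-γ t) * (C * Real.exp (-∑ i ∈ range t, γ i)) := by gcongr
      _ = C * Real.exp (-∑ i ∈ range (t + 1), γ i) := by
        rw [sum_range_succ, neg_add, Real.exp_add]; ring
  have hlim : Tendsto (fun t => C * Real.exp (-∑ i ∈ range t, γ i)) atTop (𝓝 0) := by
    simpa using (Real.tendsto_exp_neg_atTop_nhds_zero.comp hγ).const_mul C
  exact squeeze_zero' (Eventually.of_forall hd) (eventually_atTop.mpr ⟨T, hbound⟩) hlim

theorem tendsto_zero_of_le_one_sub_mul_add_mul {b γ ε : ℕ → ℝ} (hb : ∀ t, 0 ≤ b t)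
    (hγ : ∀ᶠ t in atTop, γ t ∈ Set.Icc (0 : ℝ) 1)
    (hsum : Tendsto (fun m => ∑ t ∈ range m, γ t) atTop atTop)
    (hε : Tendsto ε atTop (𝓝 0))
    (hrec : ∀ᶠ t in atTop, b (t + 1) ≤ (1 - γ t) * b t + γ t * ε t) :
    Tendsto b atTop (𝓝 0) := by
  refine tendsto_order.2 ⟨fun a ha => Eventually.of_forall fun t => ha.trans_le (hb t),
    fun a ha => ?_⟩
  have he : 0 < a / 2 := half_pos ha
  -- Once `ε t ≤ a / 2`, the excess of `b` over `a / 2` obeys the unperturbed recursion.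
  have hd : Tendsto (fun t => max (b t - a / 2) 0) atTop (𝓝 0) := by
    refine tendsto_zero_of_le_one_sub_mul (fun t => le_max_right _ _) hsum ?_
    filter_upwards [hγ, hrec, hε.eventually (eventually_le_nhds he)] with t ⟨hγ0, hγ1⟩ hbt hεt
    have : b (t + 1) - a / 2 ≤ (1 - γ t) * (b t - a / 2) := by nlinarith
    refine max_le (this.trans ?_) (by nlinarith [le_max_right (b t - a / 2) 0])
    exact mul_le_mul_of_nonneg_left (le_max_left _ _) (by linarith)
  filter_upwards [hd.eventually (gt_mem_nhds he)] with t ht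
  linarith [le_max_left (b t - a / 2) 0]

theorem tendsto_sum_range_div_add_one_rpow_atTop {a δ : ℝ} (ha : 0 < a) (hδ : δ ≤ 1) :
    Tendsto (fun m => ∑ t ∈ range m, a / ((t : ℝ) + 1) ^ δ) atTop atTop := by
  refine (not_summable_iff_tendsto_nat_atTop_of_nonneg fun t => ?_).1 fun hsum => ?_
  · positivity
  have h1 : Summable fun t : ℕ => 1 / ((t + 1 : ℕ) : ℝ) ^ δ := by
    refine (hsum.mul_left a⁻¹).congr fun t => ?_
    rw [Nat.cast_add_one, ← mul_one_div, inv_mul_cancel_left₀ ha.ne']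
  have h2 := (summable_nat_add_iff (f := fun t : ℕ => 1 / (t : ℝ) ^ δ) 1).1 h1
  rw [Real.summable_one_div_nat_rpow] at h2
  linarith

theorem eventually_div_add_one_rpow_mem_Icc {a δ : ℝ} (ha : 0 ≤ a) (hδ : 0 < δ) :
    ∀ᶠ t : ℕ in atTop, a / ((t : ℝ) + 1) ^ δ ∈ Set.Icc (0 : ℝ) 1 := by
  have hlim : Tendsto (fun t : ℕ => a / ((t : ℝ) + 1) ^ δ) atTop (𝓝 0) :=
    tendsto_const_nhds.div_atTop <| (tendsto_rpow_atTop hδ).comp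
      (tendsto_atTop_add_const_right _ 1 tendsto_natCast_atTop_atTop)
  filter_upwards [hlim.eventually (eventually_le_nhds one_pos)] with t ht
  exact ⟨by positivity, ht⟩

namespace ContinuousLinearMap

variable {E : Type*} [NormedAddCommGroup E] [NormedSpace ℝ E]

noncomputable def orbitSeminorm (U : E →L[ℝ] E) (k : ℕ) : Seminorm ℝ E :=
  ∑ j ∈ range k, (normSeminorm ℝ E).comp (U ^ j : E →L[ℝ] E).toLinearMap

variable (U : E →L[ℝ] E) {k : ℕ}

theorem orbitSeminorm_apply (k : ℕ) (v : E) :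
    U.orbitSeminorm k v = ∑ j ∈ range k, ‖(U ^ j) v‖ := by
  simp only [orbitSeminorm, _root_.sum_apply, Seminorm.comp_apply, coe_normSeminorm, coe_coe]

theorem norm_le_orbitSeminorm (hk : k ≠ 0) (v : E) : ‖v‖ ≤ U.orbitSeminorm k v := by
  rw [orbitSeminorm_apply]
  simpa using single_le_sum (f := fun j => ‖(U ^ j) v‖) (fun _ _ => norm_nonneg _)
    (mem_range.2 (Nat.pos_of_ne_zero hk))

theorem orbitSeminorm_le (k : ℕ) (v : E) :
    U.orbitSeminorm k v ≤ (∑ j ∈ range k, ‖U ^ j‖) * ‖v‖ := by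
  rw [orbitSeminorm_apply, sum_mul]
  exact sum_le_sum fun j _ => (U ^ j).le_opNorm v

/-- Applying `U` shifts the orbit: the term `‖v‖` is dropped and `‖U ^ k v‖ ≤ ‖v‖` is added. -/
theorem orbitSeminorm_apply_self_le (hU : ‖U ^ k‖ ≤ 1) (v : E) :
    U.orbitSeminorm k (U v) ≤ U.orbitSeminorm k v := by
  have hshift := sum_range_succ' (fun j => ‖(U ^ j) v‖) k
  rw [sum_range_succ] at hshift
  have hlast : ‖(U ^ k) v‖ ≤ ‖(U ^ 0) v‖ := by
    simpa using ((U ^ k).le_opNorm v).trans (mul_le_of_le_one_left (norm_nonneg v) hU)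
  have hpow (j : ℕ) : (U ^ j) (U v) = (U ^ (j + 1)) v := by rw [pow_succ]; rfl
  simp only [orbitSeminorm_apply, hpow]
  linarith

theorem exists_seminorm_contracting (T : E →L[ℝ] E) {s : ℝ} (hs : 0 < s) (hk : k ≠ 0)
    (hTk : ‖T ^ k‖ ≤ s ^ k) :
    ∃ (N : Seminorm ℝ E) (D : ℝ), 0 ≤ D ∧ (∀ v, ‖v‖ ≤ N v) ∧ (∀ v, N v ≤ D * ‖v‖) ∧
      ∀ v, N (T v) ≤ s * N v := by
  set U := s⁻¹ • T
  have hU : ‖U ^ k‖ ≤ 1 := by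
    rw [smul_pow, norm_smul, norm_pow, Real.norm_of_nonneg (inv_nonneg.2 hs.le), inv_pow]
    exact inv_mul_le_one_of_le₀ hTk (by positivity)
  refine ⟨U.orbitSeminorm k, _, sum_nonneg fun _ _ => norm_nonneg _,
    U.norm_le_orbitSeminorm hk, U.orbitSeminorm_le k, fun v => ?_⟩
  have hTv : T v = s • U v := by simp [U, smul_smul, hs.ne']
  rw [hTv, map_smul_eq_mul, Real.norm_of_nonneg hs.le]
  exact mul_le_mul_of_nonneg_left (U.orbitSeminorm_apply_self_le hU v) hs.le

end ContinuousLinearMap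

section MannIteration

variable {E : Type*} [NormedAddCommGroup E] [NormedSpace ℝ E]

theorem Seminorm.apply_mann_step_le (N : Seminorm ℝ E) {T : E →L[ℝ] E} {s : ℝ}
    (hNT : ∀ v, N (T v) ≤ s * N v) {a : ℝ} (ha : a ∈ Set.Icc (0 : ℝ) 1) (e r : E) :
    N ((1 - a) • e + a • (T e + r)) ≤ (1 - a * (1 - s)) * N e + a * N r := by
  obtain ⟨ha0, ha1⟩ := ha
  calc N ((1 - a) • e + a • (T e + r))
      ≤ (1 - a) * N e + a * (N (T e) + N r) := by
        refine (map_add_le_add N _ _).trans (add_le_add ?_ ?_) <;>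
          rw [map_smul_eq_mul, Real.norm_of_nonneg (by linarith)]
        exact mul_le_mul_of_nonneg_left (map_add_le_add N _ _) ha0
    _ ≤ (1 - a) * N e + a * (s * N e + N r) := by gcongr; exact hNT e
    _ = (1 - a * (1 - s)) * N e + a * N r := by ring

theorem Seminorm.apply_perturbed_mann_step_le (N : Seminorm ℝ E) {T A : E →L[ℝ] E} {s D : ℝ}
    (hD : 0 ≤ D) (hN_ge : ∀ v, ‖v‖ ≤ N v) (hN_le : ∀ v, N v ≤ D * ‖v‖)
    (hNT : ∀ v, N (T v) ≤ s * N v) {a : ℝ} (ha : a ∈ Set.Icc (0 : ℝ) 1) (e r : E) :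
    N ((1 - a) • e + a • (T e + (A e + r))) ≤ (1 - a * (1 - s - D * ‖A‖)) * N e + a * N r := by
  have hA : N (A e + r) ≤ D * ‖A‖ * N e + N r := by
    calc N (A e + r) ≤ N (A e) + N r := map_add_le_add N _ _
      _ ≤ D * (‖A‖ * ‖e‖) + N r := by
        gcongr; exact (hN_le _).trans (mul_le_mul_of_nonneg_left (A.le_opNorm e) hD)
      _ ≤ D * ‖A‖ * N e + N r := by rw [← mul_assoc]; gcongr; exact hN_ge e
  refine (N.apply_mann_step_le hNT ha e _).trans ?_
  nlinarith [mul_le_mul_of_nonneg_left hA ha.1]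

theorem tendsto_of_perturbed_mann_iteration {T : E →L[ℝ] E} {s : ℝ} {k : ℕ} (hs0 : 0 < s)
    (hs1 : s < 1) (hk : k ≠ 0) (hTk : ‖T ^ k‖ ≤ s ^ k) {Tt : ℕ → E →L[ℝ] E}
    (hTt : Tendsto Tt atTop (𝓝 T)) {b : E} {bt : ℕ → E} (hbt : Tendsto bt atTop (𝓝 b))
    {xstar : E} (hfix : T xstar + b = xstar) {α : ℕ → ℝ}
    (hα : ∀ᶠ t in atTop, α t ∈ Set.Icc (0 : ℝ) 1)
    (hsum : Tendsto (fun m => ∑ t ∈ range m, α t) atTop atTop) {x : ℕ → E}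
    (hrec : ∀ t, x (t + 1) = (1 - α t) • x t + α t • (Tt t (x t) + bt t)) :
    Tendsto x atTop (𝓝 xstar) := by
  obtain ⟨N, D, hD, hN_ge, hN_le, hNT⟩ := T.exists_seminorm_contracting hs0 hk hTk
  set c := (1 - s) / 2
  have hc : 0 < c := by simp only [c]; linarith
  set w := fun t => Tt t xstar + bt t - xstar
  have hw : Tendsto (fun t => N (w t) / c) atTop (𝓝 0) := by
    have hTx := ((ContinuousLinearMap.apply ℝ E xstar).continuous.tendsto T).comp hTt
    have : Tendsto w atTop (𝓝 0) := by
      simpa [w, hfix] using (hTx.add hbt).sub_const xstar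
    refine squeeze_zero (fun t => by positivity) (fun t => div_le_div_of_nonneg_right
      (hN_le (w t)) hc.le) ?_
    simpa using ((tendsto_norm_zero.comp this).const_mul D).div_const c
  have hsmall : ∀ᶠ t in atTop, D * ‖Tt t - T‖ ≤ c := by
    have := (tendsto_iff_norm_sub_tendsto_zero.1 hTt).const_mul D
    rw [mul_zero] at this
    exact this.eventually (eventually_le_nhds hc)
  have herr (t : ℕ) : x (t + 1) - xstar =
      (1 - α t) • (x t - xstar) + α t • (T (x t - xstar) + ((Tt t - T) (x t - xstar) + w t)) := by
    simp only [hrec, w, sub_apply, map_sub]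
    module
  have hstep : ∀ᶠ t in atTop, N (x (t + 1) - xstar) ≤
      (1 - c * α t) * N (x t - xstar) + c * α t * (N (w t) / c) := by
    filter_upwards [hα, hsmall] with t hαt ht
    rw [herr, show c * α t * (N (w t) / c) = α t * N (w t) by field_simp]
    refine (N.apply_perturbed_mann_step_le hD hN_ge hN_le hNT hαt _ _).trans ?_
    have : c ≤ 1 - s - D * ‖Tt t - T‖ := by simp only [c] at ht ⊢; linarith
    nlinarith [mul_le_mul_of_nonneg_left this hαt.1, apply_nonneg N (x t - xstar)]
  have hβ : Tendsto (fun t => N (x t - xstar)) atTop (𝓝 0) := by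
    refine tendsto_zero_of_le_one_sub_mul_add_mul (fun t => apply_nonneg N _) ?_ ?_ hw hstep
    · filter_upwards [hα] with t ⟨h0, h1⟩
      exact ⟨by positivity, mul_le_one₀ (by simp only [c]; linarith) h0 h1⟩
    · simpa [← mul_sum] using hsum.const_mul_atTop hc
  exact tendsto_iff_norm_sub_tendsto_zero.2
    (squeeze_zero (fun _ => norm_nonneg _) (fun t => hN_ge _) hβ)

end MannIteration

theorem spectrum.eventually_nnnorm_pow_lt {A : Type*} [NormedRing A] [NormedAlgebra ℂ A]
    [CompleteSpace A] (a : A) {r : ℝ≥0} (h : spectralRadius ℂ a < r) :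
    ∀ᶠ n in atTop, ‖a ^ n‖₊ < r ^ n := by
  filter_upwards [(pow_nnnorm_pow_one_div_tendsto_nhds_spectralRadius a).eventually_lt_const h,
    eventually_ne_atTop 0] with n hn hn0
  rw [one_div] at hn
  rw [← ENNReal.coe_lt_coe, ENNReal.coe_pow,
    ← ENNReal.rpow_inv_natCast_pow hn0 (‖a ^ n‖₊ : ℝ≥0∞)]
  exact (ENNReal.pow_lt_pow_left_iff hn0).2 hn

namespace Matrix

variable {n : Type*} [Fintype n] [DecidableEq n]

theorem mulVec_add_eq_of_isUnit_det_one_sub {R : Type*} [CommRing R] {P : Matrix n n R}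
    (h : IsUnit (1 - P).det) (y : n → R) : P *ᵥ ((1 - P)⁻¹ *ᵥ y) + y = (1 - P)⁻¹ *ᵥ y := by
  have hinv : (1 - P) *ᵥ ((1 - P)⁻¹ *ᵥ y) = y := by
    rw [mulVec_mulVec, mul_nonsing_inv _ h, one_mulVec]
  rw [sub_mulVec, one_mulVec] at hinv
  nth_rw 2 [← hinv]
  abel

noncomputable def toLinftyCLM : Matrix n n ℝ ≃ₐ[ℝ] ((n → ℝ) →L[ℝ] (n → ℝ)) :=
  toLinAlgEquiv'.trans (Module.End.toContinuousLinearMap (n → ℝ))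

theorem continuous_toLinftyCLM : Continuous (toLinftyCLM : Matrix n n ℝ → _) :=
  (toLinftyCLM : Matrix n n ℝ ≃ₐ[ℝ] _).toLinearMap.continuous_of_finiteDimensional

section LinftyOpNorm

attribute [local instance] Matrix.linftyOpNormedRing Matrix.linftyOpNormedAlgebra

theorem norm_toLinftyCLM (A : Matrix n n ℝ) : ‖toLinftyCLM A‖ = ‖A‖ :=
  (linfty_opNorm_eq_opNorm A).symm

theorem linfty_opNNNorm_map_algebraMap (A : Matrix n n ℝ) :
    ‖A.map (algebraMap ℝ ℂ)‖₊ = ‖A‖₊ := by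
  simp [linfty_opNNNorm_def]

end LinftyOpNorm

end Matrix

section SpecRadiusLtOne

open Matrix

variable {M : ℕ} {P : Matrix (Fin M) (Fin M) ℝ}

theorem SpecRadiusLtOne.norm_lt_one_of_mem_spectrum (hP : SpecRadiusLtOne P) {z : ℂ}
    (hz : z ∈ spectrum ℂ (P.map (algebraMap ℝ ℂ))) : ‖z‖ < 1 :=
  hP z (mem_spectrum_iff_isRoot_charpoly.1 hz)

theorem SpecRadiusLtOne.isUnit_det_one_sub (hP : SpecRadiusLtOne P) : IsUnit (1 - P).det := by
  have hunit : IsUnit (1 - P.map (algebraMap ℝ ℂ)) := by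
    by_contra h
    have h1 : (1 : ℂ) ∈ spectrum ℂ (P.map (algebraMap ℝ ℂ)) := by
      rwa [spectrum.mem_iff, map_one]
    simpa using hP.norm_lt_one_of_mem_spectrum h1
  have hdet : (1 - P.map (algebraMap ℝ ℂ)).det = algebraMap ℝ ℂ (1 - P).det := by
    rw [RingHom.map_det]; simp [RingHom.mapMatrix_apply, Matrix.map_sub]
  rw [isUnit_iff_isUnit_det, hdet] at hunit
  exact isUnit_iff_ne_zero.2 fun h0 => by simp [h0] at hunit

attribute [local instance] Matrix.linftyOpNormedRing Matrix.linftyOpNormedAlgebra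

theorem SpecRadiusLtOne.spectralRadius_lt_one (hP : SpecRadiusLtOne P) :
    spectralRadius ℂ (P.map (algebraMap ℝ ℂ)) < 1 := by
  rcases isEmpty_or_nonempty (Fin M) with hM | hM
  · rw [spectrum.SpectralRadius.of_subsingleton]
    exact zero_lt_one
  · refine spectrum.spectralRadius_lt_of_forall_lt _ fun z hz => ?_
    exact_mod_cast hP.norm_lt_one_of_mem_spectrum hz

theorem SpecRadiusLtOne.exists_norm_pow_le (hP : SpecRadiusLtOne P) :
    ∃ s : ℝ, 0 < s ∧ s < 1 ∧ ∃ k ≠ 0, ‖toLinftyCLM P ^ k‖ ≤ s ^ k := by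
  obtain ⟨r, hρr, hr1⟩ := ENNReal.lt_iff_exists_nnreal_btwn.1 hP.spectralRadius_lt_one
  obtain ⟨k, hk, hk0⟩ :=
    ((spectrum.eventually_nnnorm_pow_lt _ hρr).and (eventually_ne_atTop 0)).exists
  refine ⟨r, ?_, by exact_mod_cast hr1, k, hk0, ?_⟩
  · exact_mod_cast zero_le.trans_lt hρr
  · rw [← map_pow, norm_toLinftyCLM, ← coe_nnnorm, ← linfty_opNNNorm_map_algebraMap,
      Matrix.map_pow]
    exact_mod_cast hk.le

end SpecRadiusLtOne

theorem diland_as_convergence_general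
    {Ω : Type*} [MeasurableSpace Ω] (μ : Measure Ω)
    (M n : ℕ) (P : Matrix (Fin M) (Fin M) ℝ) (hP : SpecRadiusLtOne P)
    (B : Matrix (Fin M) (Fin n) ℝ) (u : Fin n → ℝ)
    (Pt : ℕ → Ω → Matrix (Fin M) (Fin M) ℝ)
    (Bt : ℕ → Ω → Matrix (Fin M) (Fin n) ℝ)
    (hconv : ∀ᵐ ω ∂μ,
      Tendsto (fun t => Pt t ω) atTop (nhds P) ∧
      Tendsto (fun t => Bt t ω) atTop (nhds B))
    (a δ : ℝ) (ha : 0 < a) (hδ0 : 0 < δ) (hδ1 : δ ≤ 1)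
    (α : ℕ → ℝ) (hα : ∀ t : ℕ, α t = a / ((t : ℝ) + 1) ^ δ)
    (x : ℕ → Ω → Fin M → ℝ)
    (hrec : ∀ (t : ℕ) (ω : Ω), x (t + 1) ω =
      (1 - α t) • x t ω + α t • ((Pt t ω).mulVec (x t ω) + (Bt t ω).mulVec u)) :
    ∀ᵐ ω ∂μ, Tendsto (fun t => x t ω) atTop
      (nhds ((1 - P)⁻¹.mulVec (B.mulVec u))) := by
  obtain rfl : α = fun t : ℕ => a / ((t : ℝ) + 1) ^ δ := funext hα
  obtain ⟨s, hs0, hs1, k, hk, hPk⟩ := hP.exists_norm_pow_le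
  have hfix := Matrix.mulVec_add_eq_of_isUnit_det_one_sub hP.isUnit_det_one_sub (B.mulVec u)
  filter_upwards [hconv] with ω ⟨hPω, hBω⟩
  exact tendsto_of_perturbed_mann_iteration hs0 hs1 hk hPk
    ((Matrix.continuous_toLinftyCLM.tendsto P).comp hPω)
    (((continuous_id.matrix_mulVec continuous_const).tendsto B).comp hBω) hfix
    (eventually_div_add_one_rpow_mem_Icc ha.le hδ0)
    (tendsto_sum_range_div_add_one_rpow_atTop ha hδ1) (hrec · ω)

/-- Main DILAND convergence theorem: on a probability space `(Ω, 𝓕, μ)`, if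
`ρ(P) < 1` and the random matrices `P_t, B_t` converge to `P, B` almost surely,
then with `α(t) = a/(t+1)^δ` (`a > 0`, `0 < δ ≤ 1`) the random iterates
`x(t+1) = (1 - α(t))·x(t) + α(t)·(P_t·x(t) + B_t·u)` converge almost surely to
`(I - P)⁻¹·B·u`, the exact sensor locations. -/
theorem diland_as_convergence
    {Ω : Type*} [MeasurableSpace Ω] (μ : Measure Ω) [IsProbabilityMeasure μ]
    (M n : ℕ) (P : Matrix (Fin M) (Fin M) ℝ) (hP : SpecRadiusLtOne P)
    (B : Matrix (Fin M) (Fin n) ℝ) (u : Fin n → ℝ)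
    (Pt : ℕ → Ω → Matrix (Fin M) (Fin M) ℝ)
    (Bt : ℕ → Ω → Matrix (Fin M) (Fin n) ℝ)
    (hPtmeas : ∀ (t : ℕ) (i j : Fin M), Measurable fun ω => Pt t ω i j)
    (hBtmeas : ∀ (t : ℕ) (i : Fin M) (k : Fin n), Measurable fun ω => Bt t ω i k)
    (hconv : ∀ᵐ ω ∂μ,
      Tendsto (fun t => Pt t ω) atTop (nhds P) ∧
      Tendsto (fun t => Bt t ω) atTop (nhds B))
    (a δ : ℝ) (ha : 0 < a) (hδ0 : 0 < δ) (hδ1 : δ ≤ 1)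
    (α : ℕ → ℝ) (hα : ∀ t : ℕ, α t = a / ((t : ℝ) + 1) ^ δ)
    (x0 : Fin M → ℝ) (x : ℕ → Ω → Fin M → ℝ)
    (hx0 : ∀ ω, x 0 ω = x0)
    (hrec : ∀ (t : ℕ) (ω : Ω), x (t + 1) ω =
      (1 - α t) • x t ω + α t • ((Pt t ω).mulVec (x t ω) + (Bt t ω).mulVec u)) :
    ∀ᵐ ω ∂μ, Tendsto (fun t => x t ω) atTop
      (nhds ((1 - P)⁻¹.mulVec (B.mulVec u))) :=
  diland_as_convergence_general μ M n P hP B u Pt Bt hconv a δ ha hδ0 hδ1 α hα x hrec
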